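/- arXiv:2008.02240 — 2 statements merged into one kernel-verified Lean document; each statement's English description precedes it below -/
import Mathlib

section
/- The formal power series E(x) = (1 - x - sqrt(1 - 6x + 5x^2))/(2x(1-x)) (with the branch chosen so that E is a power series with E(0)=1) has nonnegative integer coefficients, and its coefficient of x^n equals the number of Schröder paths of semilength n avoiding the consecutive pattern UF. -/
open PowerSeries

inductive Step : Type
  | U | D | F
  deriving DecidableEq

def Step.len : Step → ℕ
  | .U => 1 | .D => 1 | .F => 2

def Step.alt : Step → ℤ
  | .U => 1 | .D => -1 | .F => 0

/-- Total length (x-displacement) of a path. -/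
def pathLen (w : List Step) : ℕ := (w.map Step.len).sum

/-- Final altitude (y-displacement) of a path. -/
def pathAlt (w : List Step) : ℤ := (w.map Step.alt).sum

/-- A Schröder path of semilength `n`: from (0,0) to (2n,0), never below the x-axis. -/
def IsSchroeder (n : ℕ) (w : List Step) : Prop :=
  pathLen w = 2 * n ∧ pathAlt w = 0 ∧ ∀ p : List Step, p <+: w → 0 ≤ pathAlt p

/-- `w` avoids the consecutive pattern `UF`. -/
def AvoidsUF (w : List Step) : Prop := ¬ ([Step.U, Step.F] <:+: w)

/-- Number of ascents: maximal nonempty runs of consecutive up-steps,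
counted via their last up-step. -/
def ascents (w : List Step) : ℕ :=
  (List.range w.length).countP
    (fun i => decide (w[i]? = some Step.U ∧ w[i+1]? ≠ some Step.U))

noncomputable def schroederCount (n : ℕ) : ℕ :=
  Nat.card {w : List Step // IsSchroeder n w}

noncomputable def schroederUFCount (n : ℕ) : ℕ :=
  Nat.card {w : List Step // IsSchroeder n w ∧ AvoidsUF w}

noncomputable def totalAscents (n : ℕ) : ℕ :=
  ∑ᶠ w ∈ {w : List Step | IsSchroeder n w}, ascents w

noncomputable def totalAscentsSq (n : ℕ) : ℕ :=
  ∑ᶠ w ∈ {w : List Step | IsSchroeder n w}, (ascents w) ^ 2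

noncomputable def ascCount (n k : ℕ) : ℕ :=
  Nat.card {w : List Step // IsSchroeder n w ∧ ascents w = k}

noncomputable def vv : PowerSeries (Polynomial ℚ) :=
  PowerSeries.C Polynomial.X

/-!
A nonempty UF-avoiding Schröder path is either `F w` or `U w₁ D w₂`, with `D` the first return
to the axis and `w₁` not beginning with `F`. Hence its generating function `A` satisfies
`A = 1 + x A + x B A`, where `B = (1 - x) A` counts the paths not beginning with `F`, i.e.
`A = 1 + x A + x (1 - x) A²`. The given `E` satisfies the same equation: expanding
`(1 - x - 2x(1 - x)E)² = 1 - 6x + 5x²` leaves `4x(1 - x)` times it. The solution is unique,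
since two solutions differ by a series killed by the unit `1 - x - x(1 - x)(E + A)`.
-/

open Finset.HasAntidiagonal

instance : Fintype Step :=
  ⟨{.U, .D, .F}, fun x => by cases x <;> simp⟩

@[simp] lemma pathLen_nil : pathLen [] = 0 := rfl

@[simp] lemma pathAlt_nil : pathAlt [] = 0 := rfl

@[simp] lemma pathLen_cons (c : Step) (w : List Step) : pathLen (c :: w) = c.len + pathLen w := by
  simp [pathLen]

@[simp] lemma pathAlt_cons (c : Step) (w : List Step) : pathAlt (c :: w) = c.alt + pathAlt w := by
  simp [pathAlt]

@[simp] lemma pathLen_append (x y : List Step) : pathLen (x ++ y) = pathLen x + pathLen y := by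
  simp [pathLen]

@[simp] lemma pathAlt_append (x y : List Step) : pathAlt (x ++ y) = pathAlt x + pathAlt y := by
  simp [pathAlt]

lemma length_le_pathLen (w : List Step) : w.length ≤ pathLen w := by
  induction w with
  | nil => rfl
  | cons c w ih => cases c <;> simp [Step.len] <;> omega

lemma even_pathLen_add_pathAlt (w : List Step) : Even ((pathLen w : ℤ) + pathAlt w) := by
  induction w with
  | nil => simp
  | cons c w ih =>
    have hc : Even ((c.len : ℤ) + c.alt) := by cases c <;> decide
    simpa [add_add_add_comm] using hc.add ih

lemma even_pathLen_of_pathAlt_eq_zero {w : List Step} (h : pathAlt w = 0) : Even (pathLen w) := by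
  simpa [h, Int.even_coe_nat] using even_pathLen_add_pathAlt w

def StaysAbove (a : ℤ) (w : List Step) : Prop :=
  ∀ p, p <+: w → a ≤ pathAlt p

lemma StaysAbove.nonpos {a : ℤ} {w : List Step} (h : StaysAbove a w) : a ≤ 0 :=
  h [] w.nil_prefix

lemma StaysAbove.mono {a b : ℤ} {w : List Step} (h : StaysAbove a w) (hba : b ≤ a) :
    StaysAbove b w :=
  fun p hp => hba.trans (h p hp)

lemma StaysAbove.of_prefix {a : ℤ} {v w : List Step} (h : StaysAbove a w) (hv : v <+: w) :
    StaysAbove a v :=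
  fun p hp => h p (hp.trans hv)

@[simp] lemma staysAbove_nil {a : ℤ} : StaysAbove a [] ↔ a ≤ 0 :=
  ⟨StaysAbove.nonpos, fun ha p hp => by simp [List.prefix_nil.mp hp, ha]⟩

lemma staysAbove_cons {a : ℤ} {c : Step} {w : List Step} :
    StaysAbove a (c :: w) ↔ a ≤ 0 ∧ StaysAbove (a - c.alt) w := by
  simp only [StaysAbove, List.prefix_cons_iff]
  constructor
  · intro h
    exact ⟨by simpa using h [] (.inl rfl), fun p hp => by
      have := h (c :: p) (.inr ⟨p, rfl, hp⟩); rw [pathAlt_cons] at this; omega⟩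
  · rintro ⟨ha, h⟩ p (rfl | ⟨q, rfl, hq⟩)
    · simpa using ha
    · have := h q hq; rw [pathAlt_cons]; omega

lemma staysAbove_append {a : ℤ} {x y : List Step} :
    StaysAbove a (x ++ y) ↔ StaysAbove a x ∧ StaysAbove (a - pathAlt x) y := by
  induction x generalizing a with
  | nil => simpa using fun h => h.nonpos
  | cons c x ih => simp [staysAbove_cons, ih, sub_sub, and_assoc]

def IsSchroederPath (w : List Step) : Prop :=
  pathAlt w = 0 ∧ StaysAbove 0 w

lemma isSchroeder_iff {n : ℕ} {w : List Step} :
    IsSchroeder n w ↔ pathLen w = 2 * n ∧ IsSchroederPath w :=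
  Iff.rfl

lemma isSchroederPath_nil : IsSchroederPath [] := by
  simp [IsSchroederPath]

lemma isSchroederPath_F_cons_iff {w : List Step} :
    IsSchroederPath (.F :: w) ↔ IsSchroederPath w := by
  simp [IsSchroederPath, staysAbove_cons, Step.alt]

lemma not_isSchroederPath_D_cons (w : List Step) : ¬ IsSchroederPath (.D :: w) := by
  simp only [IsSchroederPath, staysAbove_cons, Step.alt]
  exact fun ⟨_, _, h⟩ => absurd h.nonpos (by norm_num)

/-- First-return decomposition, generalized over the level `b` so that it goes through by
induction on the path. -/
lemma exists_eq_append_D_cons_of_staysAbove {b : ℤ} {t : List Step} (hb : b ≤ 0)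
    (ht : StaysAbove (b - 1) t) (hend : pathAlt t < b) :
    ∃ w₁ w₂, t = w₁ ++ .D :: w₂ ∧ pathAlt w₁ = b ∧ StaysAbove b w₁ := by
  induction t generalizing b with
  | nil => rw [pathAlt_nil] at hend; omega
  | cons c t ih =>
    rw [staysAbove_cons] at ht
    by_cases hfirst : c = .D ∧ b = 0
    · obtain ⟨rfl, rfl⟩ := hfirst
      exact ⟨[], t, rfl, rfl, by simp⟩
    · have hb' : b - c.alt ≤ 0 := by cases c <;> simp_all [Step.alt]; omega
      obtain ⟨w₁, w₂, rfl, h₁, h₂⟩ :=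
        ih hb' (by rw [sub_right_comm]; exact ht.2) (by rw [pathAlt_cons] at hend; omega)
      exact ⟨c :: w₁, w₂, rfl, by simp [h₁], staysAbove_cons.mpr ⟨hb, h₂⟩⟩

lemma isSchroederPath_U_cons_iff {t : List Step} :
    IsSchroederPath (.U :: t) ↔
      ∃ w₁ w₂, t = w₁ ++ .D :: w₂ ∧ IsSchroederPath w₁ ∧ IsSchroederPath w₂ := by
  simp only [IsSchroederPath, staysAbove_cons, Step.alt]
  constructor
  · rintro ⟨halt, -, ht⟩
    obtain ⟨w₁, w₂, rfl, h₁, h₁'⟩ :=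
      exists_eq_append_D_cons_of_staysAbove le_rfl ht (by simp only [pathAlt_cons, Step.alt] at halt; omega)
    rw [staysAbove_append, staysAbove_cons] at ht
    simp only [pathAlt_cons, pathAlt_append, Step.alt, h₁] at halt ht
    exact ⟨w₁, w₂, rfl, ⟨h₁, h₁'⟩, by omega, by simpa using ht.2.2⟩
  · rintro ⟨w₁, w₂, rfl, ⟨h₁, h₁'⟩, h₂, h₂'⟩
    simp only [pathAlt_cons, pathAlt_append, staysAbove_append, staysAbove_cons, h₁, h₂,
      Step.alt]
    exact ⟨by norm_num, le_rfl, h₁'.mono (by norm_num), by norm_num, by simpa using h₂'⟩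

lemma eq_of_append_D_cons_eq_append_D_cons {w₁ w₂ v₁ v₂ : List Step}
    (h : w₁ ++ .D :: w₂ = v₁ ++ .D :: v₂) (hw : IsSchroederPath w₁) (hv : IsSchroederPath v₁) :
    w₁ = v₁ ∧ w₂ = v₂ := by
  wlog hpre : w₁ <+: v₁ generalizing w₁ w₂ v₁ v₂
  · have hpre' : v₁ <+: w₁ :=
      (List.prefix_or_prefix_of_prefix (List.prefix_append _ _)
        (by rw [h]; exact List.prefix_append _ _)).resolve_left hpre
    obtain ⟨h₁, h₂⟩ := this h.symm hv hw hpre'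
    exact ⟨h₁.symm, h₂.symm⟩
  obtain ⟨_ | ⟨c, r⟩, rfl⟩ := hpre
  · simpa using h
  · -- otherwise `v₁` would contain `w₁ ++ [D]`, which ends at level `-1`
    rw [List.append_assoc, List.append_cancel_left_eq, List.cons_append, List.cons.injEq] at h
    obtain ⟨rfl, -⟩ := h
    have := hv.2.of_prefix (List.prefix_append_right_inj w₁ |>.mpr (List.cons_prefix_cons.mpr
      ⟨rfl, List.nil_prefix⟩))
    simp [staysAbove_append, staysAbove_cons, hw.1, Step.alt] at this

lemma avoidsUF_nil : AvoidsUF [] := by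
  simp [AvoidsUF]

lemma avoidsUF_cons_iff {c : Step} {w : List Step} :
    AvoidsUF (c :: w) ↔ ¬(c = .U ∧ w.head? = some .F) ∧ AvoidsUF w := by
  simp only [AvoidsUF, List.infix_cons_iff, List.cons_prefix_cons,
    List.singleton_prefix_iff_head?_eq_some, eq_comm (a := Step.U), not_or]

lemma avoidsUF_F_cons_iff {w : List Step} : AvoidsUF (.F :: w) ↔ AvoidsUF w := by
  simp [avoidsUF_cons_iff]

lemma avoidsUF_append_D_cons_iff {x y : List Step} :
    AvoidsUF (x ++ .D :: y) ↔ AvoidsUF x ∧ AvoidsUF y := by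
  induction x with
  | nil => simp [avoidsUF_cons_iff, avoidsUF_nil]
  | cons c x ih =>
    have hhead : (x ++ .D :: y).head? = some .F ↔ x.head? = some .F := by cases x <;> simp
    rw [List.cons_append, avoidsUF_cons_iff, avoidsUF_cons_iff, ih, hhead, and_assoc]

lemma avoidsUF_U_cons_append_D_cons_iff {x y : List Step} :
    AvoidsUF (.U :: (x ++ .D :: y)) ↔ x.head? ≠ some .F ∧ AvoidsUF x ∧ AvoidsUF y := by
  have hhead : (x ++ .D :: y).head? = some .F ↔ x.head? = some .F := by cases x <;> simp
  rw [avoidsUF_cons_iff, avoidsUF_append_D_cons_iff, hhead]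
  simp

lemma isSchroeder_zero_iff {w : List Step} : IsSchroeder 0 w ↔ w = [] := by
  constructor
  · intro h
    exact List.eq_nil_of_length_eq_zero (by have := length_le_pathLen w; have := h.1; omega)
  · rintro rfl
    exact ⟨rfl, isSchroederPath_nil⟩

lemma isSchroeder_F_cons_iff {n : ℕ} {w : List Step} :
    IsSchroeder (n + 1) (.F :: w) ↔ IsSchroeder n w := by
  rw [isSchroeder_iff, isSchroeder_iff, isSchroederPath_F_cons_iff]
  exact and_congr_left fun _ => by simp only [pathLen_cons, Step.len]; omega

lemma finite_setOf_isSchroeder (n : ℕ) : {w | IsSchroeder n w}.Finite :=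
  (List.finite_length_le Step (2 * n)).subset fun w hw => by
    have := length_le_pathLen w; have := hw.1; simp only [Set.mem_ofPred_eq]; omega

lemma card_isSchroeder_zero {P : List Step → Prop} (h : P []) :
    Nat.card {w // IsSchroeder 0 w ∧ P w} = 1 :=
  Nat.card_eq_one_iff_exists.mpr ⟨⟨[], isSchroeder_zero_iff.mpr rfl, h⟩,
    fun w => Subtype.ext (isSchroeder_zero_iff.mp w.2.1)⟩

abbrev SchroederUF (n : ℕ) : Type :=
  {w : List Step // IsSchroeder n w ∧ AvoidsUF w}

abbrev SchroederUFNoLeadingF (n : ℕ) : Type :=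
  {w : List Step // IsSchroeder n w ∧ AvoidsUF w ∧ w.head? ≠ some .F}

instance (n : ℕ) : Finite (SchroederUF n) :=
  ((finite_setOf_isSchroeder n).subset fun _ hw => hw.1).to_subtype

instance (n : ℕ) : Finite (SchroederUFNoLeadingF n) :=
  ((finite_setOf_isSchroeder n).subset fun _ hw => hw.1).to_subtype

namespace SchroederUF

variable {n : ℕ}

def consF (w : SchroederUF n) : SchroederUF (n + 1) :=
  ⟨.F :: w.1, isSchroeder_F_cons_iff.mpr w.2.1, avoidsUF_F_cons_iff.mpr w.2.2⟩

def glue (p : antidiagonal n) (w : SchroederUFNoLeadingF p.1.1 × SchroederUF p.1.2) :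
    SchroederUF (n + 1) :=
  ⟨.U :: (w.1.1 ++ .D :: w.2.1), by
    obtain ⟨⟨i, j⟩, hij⟩ := p
    obtain ⟨⟨w₁, ⟨hlen₁, hw₁⟩, hav₁, hF⟩, ⟨w₂, ⟨hlen₂, hw₂⟩, hav₂⟩⟩ := w
    rw [mem_antidiagonal] at hij
    refine ⟨⟨?_, isSchroederPath_U_cons_iff.mpr ⟨w₁, w₂, rfl, hw₁, hw₂⟩⟩,
      avoidsUF_U_cons_append_D_cons_iff.mpr ⟨hF, hav₁, hav₂⟩⟩
    simp only [pathLen_cons, pathLen_append, Step.len] at hlen₁ hlen₂ ⊢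
    omega⟩

lemma consF_injective : Function.Injective (consF (n := n)) := by
  rintro ⟨w, hw⟩ ⟨v, hv⟩ h
  simpa [consF] using h

lemma sigma_glue_injective :
    Function.Injective fun x : Σ p : antidiagonal n,
      SchroederUFNoLeadingF p.1.1 × SchroederUF p.1.2 => glue x.1 x.2 := by
  rintro ⟨⟨⟨i, j⟩, hij⟩, ⟨w₁, hw₁⟩, ⟨w₂, hw₂⟩⟩ ⟨⟨⟨i', j'⟩, hij'⟩, ⟨v₁, hv₁⟩, ⟨v₂, hv₂⟩⟩ h
  simp only [glue, Subtype.mk.injEq, List.cons.injEq, true_and] at h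
  obtain ⟨rfl, rfl⟩ := eq_of_append_D_cons_eq_append_D_cons h hw₁.1.2 hv₁.1.2
  obtain rfl : i = i' := by
    have h₁ : pathLen w₁ = 2 * i := hw₁.1.1
    have h₁' : pathLen w₁ = 2 * i' := hv₁.1.1
    omega
  obtain rfl : j = j' := by rw [mem_antidiagonal] at hij hij'; omega
  rfl

lemma card_succ_eq_card_noLeadingF_add :
    Nat.card (SchroederUF (n + 1)) = Nat.card (SchroederUFNoLeadingF (n + 1)) +
      Nat.card (SchroederUF n) := by
  rw [← Nat.card_sum]
  refine (Nat.card_eq_of_bijective (Sum.elim (fun w => ⟨w.1, w.2.1, w.2.2.1⟩) consF)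
    ⟨?_, ?_⟩).symm
  · rintro (⟨w, hw⟩ | ⟨w, hw⟩) (⟨v, hv⟩ | ⟨v, hv⟩) h <;>
      simp only [Sum.elim_inl, Sum.elim_inr, consF, Subtype.mk.injEq] at h
    · simp [h]
    · simp [h] at hw
    · simp [← h] at hv
    · simpa using h
  · rintro ⟨w, hw, hav⟩
    by_cases hF : w.head? = some .F
    · obtain ⟨t, rfl⟩ : ∃ t, w = .F :: t := by
        cases w with
        | nil => simp at hF
        | cons c t => exact ⟨t, by simpa using hF⟩
      exact ⟨.inr ⟨t, isSchroeder_F_cons_iff.mp hw, avoidsUF_F_cons_iff.mp hav⟩, rfl⟩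
    · exact ⟨.inl ⟨w, hw, hav, hF⟩, rfl⟩

lemma card_succ :
    Nat.card (SchroederUF (n + 1)) = Nat.card (SchroederUF n) +
      ∑ p ∈ antidiagonal n, Nat.card (SchroederUFNoLeadingF p.1) * Nat.card (SchroederUF p.2) := by
  rw [← Finset.sum_coe_sort]
  simp only [← Nat.card_prod, ← Nat.card_sigma, ← Nat.card_sum]
  refine (Nat.card_eq_of_bijective (Sum.elim consF fun x => glue x.1 x.2) ⟨?_, ?_⟩).symm
  · rintro (w | x) (v | y) h
    · exact congrArg _ (consF_injective h)
    · simp [consF, glue] at h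
    · simp [consF, glue] at h
    · exact congrArg _ (sigma_glue_injective h)
  · rintro ⟨_ | ⟨c, t⟩, hw, hav⟩
    · simp [isSchroeder_iff] at hw
    · cases c with
      | F => exact ⟨.inl ⟨t, isSchroeder_F_cons_iff.mp hw, avoidsUF_F_cons_iff.mp hav⟩, rfl⟩
      | D => exact (not_isSchroederPath_D_cons t hw.2).elim
      | U =>
        obtain ⟨w₁, w₂, rfl, hw₁, hw₂⟩ := isSchroederPath_U_cons_iff.mp hw.2
        obtain ⟨hF, hav₁, hav₂⟩ := avoidsUF_U_cons_append_D_cons_iff.mp hav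
        obtain ⟨i, hi⟩ := even_pathLen_of_pathAlt_eq_zero hw₁.1
        have hlen := hw.1
        simp only [pathLen_cons, pathLen_append, Step.len] at hlen
        exact ⟨.inr ⟨⟨(i, n - i), by rw [mem_antidiagonal]; omega⟩,
          ⟨w₁, ⟨by simp; omega, hw₁⟩, hav₁, hF⟩, ⟨w₂, ⟨by simp; omega, hw₂⟩, hav₂⟩⟩, rfl⟩

end SchroederUF

section Series

variable (R : Type*) [CommRing R]

noncomputable def schroederUFSeries : R⟦X⟧ :=
  mk fun n => (schroederUFCount n : R)

noncomputable def schroederUFNoLeadingFSeries : R⟦X⟧ :=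
  mk fun n => (Nat.card (SchroederUFNoLeadingF n) : R)

lemma schroederUFNoLeadingFSeries_eq : schroederUFNoLeadingFSeries R = (1 - X) * schroederUFSeries R := by
  ext (_ | n)
  · simp [schroederUFNoLeadingFSeries, schroederUFSeries, schroederUFCount, card_isSchroeder_zero, avoidsUF_nil]
  · simp [schroederUFNoLeadingFSeries, schroederUFSeries, schroederUFCount, sub_mul,
      SchroederUF.card_succ_eq_card_noLeadingF_add]

lemma schroederUFSeries_eq : schroederUFSeries R = 1 + X * schroederUFSeries R + X * (schroederUFNoLeadingFSeries R * schroederUFSeries R) := by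
  ext (_ | n)
  · simp [schroederUFSeries, schroederUFCount, card_isSchroeder_zero, avoidsUF_nil]
  · rw [map_add, map_add, coeff_succ_X_mul, coeff_succ_X_mul, coeff_mul]
    simp [schroederUFSeries, schroederUFNoLeadingFSeries, schroederUFCount, SchroederUF.card_succ]

lemma schroederUFSeries_eq_quadratic :
    schroederUFSeries R = 1 + X * schroederUFSeries R + X * (1 - X) * schroederUFSeries R ^ 2 := by
  conv_lhs => rw [schroederUFSeries_eq, schroederUFNoLeadingFSeries_eq]
  ring

variable {R}

lemma eq_of_eq_quadratic {E F : R⟦X⟧} (hE : E = 1 + X * E + X * (1 - X) * E ^ 2)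
    (hF : F = 1 + X * F + X * (1 - X) * F ^ 2) : E = F := by
  have hunit : IsUnit (1 - X - X * (1 - X) * (E + F)) :=
    isUnit_iff_constantCoeff.mpr (by simp)
  rw [← sub_eq_zero, ← hunit.mul_left_eq_zero]
  linear_combination hE - hF

lemma eq_quadratic_of_sq_eq [IsDomain R] [CharZero R] {s E : R⟦X⟧}
    (hs : s ^ 2 = 1 - 6 * X + 5 * X ^ 2) (hE : 2 * X * (1 - X) * E = 1 - X - s) :
    E = 1 + X * E + X * (1 - X) * E ^ 2 := by
  have h4 : (4 : R⟦X⟧) ≠ 0 := fun h => by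
    simpa [map_ofNat] using congrArg constantCoeff h
  have h1X : (1 - X : R⟦X⟧) ≠ 0 := fun h => by simpa using congrArg constantCoeff h
  have hprod : 4 * X * (1 - X) * (E - (1 + X * E + X * (1 - X) * E ^ 2)) = 0 := by
    linear_combination (1 - X - 2 * X * (1 - X) * E + s) * hE - hs
  rw [← sub_eq_zero]
  simpa [h4, X_ne_zero, h1X] using hprod

end Series

theorem stmt1_general (s E : PowerSeries ℚ)
    (hs : s ^ 2 = 1 - 6 * X + 5 * X ^ 2)
    (hE : 2 * X * (1 - X) * E = 1 - X - s) :
    (∀ n : ℕ, ∃ m : ℕ, coeff n E = (m : ℚ)) ∧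
      ∀ n : ℕ, coeff n E = (schroederUFCount n : ℚ) := by
  have hcoeff (n : ℕ) : coeff n E = (schroederUFCount n : ℚ) := by
    rw [eq_of_eq_quadratic (eq_quadratic_of_sq_eq hs hE) (schroederUFSeries_eq_quadratic ℚ)]
    simp [schroederUFSeries]
  exact ⟨fun n => ⟨_, hcoeff n⟩, hcoeff⟩

theorem stmt1 (s E : PowerSeries ℚ)
    (hs : s ^ 2 = 1 - 6 * X + 5 * X ^ 2)
    (hs0 : constantCoeff s = 1)
    (hE : 2 * X * (1 - X) * E = 1 - X - s) :
    (∀ n : ℕ, ∃ m : ℕ, coeff n E = (m : ℚ)) ∧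
      ∀ n : ℕ, coeff n E = (schroederUFCount n : ℚ) :=
  stmt1_general s E hs hE
end

section
/- Let a_n = [x^n] (1 - 6x + x^2)^{-1/2}, where (1-6x+x^2)^{-1/2} is the formal power series with constant term 1 whose square times (1-6x+x^2) equals 1 (these are the central Delannoy numbers). Then a_n ~ (3 - sqrt(8))^{-n-1/2} (2 sqrt(8))^{-1/2} n^{-1/2} / sqrt(pi) as n → ∞. -/
open PowerSeries

/-!
With `β = 3 - √8` we have `1 - 6x + x² = (1 - βx)(1 - β⁻¹x)`, so `a` is the product of
`(1 - β⁻¹x)^(-1/2)` and `(1 - βx)^(-1/2)`, and `βⁿ [xⁿ] a = ∑ₖ cₖ β^(2k) c_(n-k)`, where `cₙ`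
are the coefficients of `(1 - x)^(-1/2)`. Wallis' product gives `cₙ ~ 1/√(πn)`; since the weights
`cₖ β^(2k)` decay geometrically, dominated convergence yields
`√n ∑ₖ cₖ qᵏ c_(n-k) → (1/√π) ∑ₖ cₖ qᵏ = 1/√(π(1 - q))` for `q = β²`, and `1 - β² = 2√8 β`.
-/

open Finset Filter Topology Real

/-- `invSqrtCoeff n = centralBinom n / 4 ^ n`, the coefficient of `xⁿ` in `(1 - x)^(-1/2)`. -/
noncomputable def invSqrtCoeff (n : ℕ) : ℝ := ∏ i ∈ range n, (2 * i + 1 : ℝ) / (2 * i + 2)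

@[simp]
lemma invSqrtCoeff_zero : invSqrtCoeff 0 = 1 :=
  prod_range_zero _

lemma invSqrtCoeff_succ (n : ℕ) :
    invSqrtCoeff (n + 1) = invSqrtCoeff n * ((2 * n + 1) / (2 * n + 2)) :=
  prod_range_succ _ _

lemma invSqrtCoeff_pos (n : ℕ) : 0 < invSqrtCoeff n :=
  prod_pos fun i _ => by positivity

lemma invSqrtCoeff_le_one (n : ℕ) : invSqrtCoeff n ≤ 1 :=
  prod_le_one (fun i _ => by positivity) fun i _ => (div_le_one (by positivity)).2 (by linarith)

lemma invSqrtCoeff_sq_mul_wallis (n : ℕ) :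
    invSqrtCoeff n ^ 2 * (2 * n + 1) * Wallis.W n = 1 := by
  induction n with
  | zero => simp [Wallis.W]
  | succ n ih =>
    refine Eq.trans ?_ ih
    rw [invSqrtCoeff_succ, Wallis.W_succ]
    push_cast
    field_simp
    ring

lemma tendsto_invSqrtCoeff_mul_sqrt :
    Tendsto (fun n => invSqrtCoeff n * √n) atTop (𝓝 (√π)⁻¹) := by
  have hsq : Tendsto (fun n : ℕ => (Wallis.W n)⁻¹ * (n / (2 * n + 1))) atTop
      (𝓝 ((π / 2)⁻¹ * (1 / 2))) :=
    (Wallis.tendsto_W_nhds_pi_div_two.inv₀ (by positivity)).mul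
      Stirling.tendsto_self_div_two_mul_self_add_one
  rw [show (π / 2)⁻¹ * (1 / 2) = π⁻¹ by ring] at hsq
  rw [← Real.sqrt_inv]
  refine hsq.sqrt.congr fun n => ?_
  rw [← Real.sqrt_sq (mul_nonneg (invSqrtCoeff_pos n).le (Real.sqrt_nonneg n)), mul_pow,
    Real.sq_sqrt n.cast_nonneg]
  congr 1
  have hW := invSqrtCoeff_sq_mul_wallis n
  have := Wallis.W_pos n
  field_simp
  linear_combination (-n : ℝ) * hW

noncomputable def invSqrtOneSubX : ℝ⟦X⟧ := mk invSqrtCoeff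

@[simp]
lemma coeff_invSqrtOneSubX (n : ℕ) : coeff n invSqrtOneSubX = invSqrtCoeff n :=
  coeff_mk _ _

@[simp]
lemma constantCoeff_invSqrtOneSubX : constantCoeff invSqrtOneSubX = 1 := by
  rw [← coeff_zero_eq_constantCoeff_apply, coeff_invSqrtOneSubX, invSqrtCoeff_zero]

lemma two_smul_one_sub_X_mul_derivative_invSqrtOneSubX :
    (2 : ℝ) • ((1 - X) * d⁄dX ℝ invSqrtOneSubX) = invSqrtOneSubX := by
  ext n
  rw [sub_mul, one_mul, coeff_smul, map_sub]
  rcases n with _ | n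
  · simp [coeff_derivative, invSqrtCoeff_succ]
  · simp only [coeff_succ_X_mul, coeff_derivative, coeff_invSqrtOneSubX, smul_eq_mul]
    rw [invSqrtCoeff_succ (n + 1)]
    push_cast
    field_simp
    ring

/-- Both sides have constant term `1` and derivative `0`, by `2 (1 - X) f' = f`. -/
lemma one_sub_X_mul_invSqrtOneSubX_sq : (1 - X) * invSqrtOneSubX ^ 2 = 1 := by
  refine derivative.ext ?_ (by simp)
  have h := two_smul_one_sub_X_mul_derivative_invSqrtOneSubX
  rw [smul_eq_C_mul, map_ofNat] at h
  rw [Derivation.leibniz, derivative_pow, map_sub, derivative_X, Derivation.map_one_eq_zero]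
  simp only [smul_eq_mul]
  linear_combination invSqrtOneSubX * h

lemma invSqrtOneSubX_sq : invSqrtOneSubX ^ 2 = PowerSeries.mk 1 :=
  calc invSqrtOneSubX ^ 2 = invSqrtOneSubX ^ 2 * (PowerSeries.mk 1 * (1 - X)) := by
        rw [mk_one_mul_one_sub_eq_one, mul_one]
    _ = PowerSeries.mk 1 * ((1 - X) * invSqrtOneSubX ^ 2) := by ring
    _ = PowerSeries.mk 1 := by rw [one_sub_X_mul_invSqrtOneSubX_sq, mul_one]

lemma sum_antidiagonal_invSqrtCoeff_mul (n : ℕ) :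
    ∑ p ∈ antidiagonal n, invSqrtCoeff p.1 * invSqrtCoeff p.2 = 1 := by
  simpa [sq, coeff_mul] using congrArg (coeff n) invSqrtOneSubX_sq

lemma rescale_invSqrtOneSubX_sq (y : ℝ) : (1 - C y * X) * rescale y invSqrtOneSubX ^ 2 = 1 := by
  simpa [rescale_X] using congrArg (rescale y) one_sub_X_mul_invSqrtOneSubX_sq

lemma rescale_inv_mul_rescale_invSqrtOneSubX_sq {y : ℝ} (hy : y ≠ 0) :
    (1 - C (y + y⁻¹) * X + X ^ 2) * (rescale y⁻¹ invSqrtOneSubX * rescale y invSqrtOneSubX) ^ 2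
      = 1 := by
  have hfactor : 1 - C (y + y⁻¹) * X + X ^ 2 = (1 - C y⁻¹ * X) * (1 - C y * X) := by
    have hC : C y⁻¹ * C y = (1 : ℝ⟦X⟧) := by rw [← map_mul, inv_mul_cancel₀ hy, map_one]
    rw [map_add]
    linear_combination (-X ^ 2 : ℝ⟦X⟧) * hC
  calc _ = ((1 - C y⁻¹ * X) * rescale y⁻¹ invSqrtOneSubX ^ 2)
        * ((1 - C y * X) * rescale y invSqrtOneSubX ^ 2) := by rw [hfactor]; ring
    _ = 1 := by rw [rescale_invSqrtOneSubX_sq, rescale_invSqrtOneSubX_sq, one_mul]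

lemma PowerSeries.constantCoeff_rescale {R : Type*} [CommSemiring R] (a : R) (f : R⟦X⟧) :
    constantCoeff (rescale a f) = constantCoeff f := by
  rw [← coeff_zero_eq_constantCoeff_apply, coeff_rescale, pow_zero, one_mul,
    coeff_zero_eq_constantCoeff_apply]

lemma PowerSeries.eq_of_mul_eq_one_of_mul_sq_eq_one {R : Type*} [CommRing R] [IsDomain R]
    [NeZero (2 : R)] {f s a b : R⟦X⟧} (hs : s ^ 2 = f) (hs0 : constantCoeff s = 1) (ha : s * a = 1)
    (hb : f * b ^ 2 = 1) (hb0 : constantCoeff b = 1) : a = b := by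
  have hsb : s * b = 1 := by
    have hsq : (s * b) ^ 2 = 1 := by rw [mul_pow, hs, hb]
    refine (sq_eq_one_iff.1 hsq).resolve_right fun h => ?_
    have h0 := congrArg constantCoeff h
    rw [map_mul, hs0, hb0, map_neg, map_one] at h0
    exact two_ne_zero (by linear_combination h0 : (2 : R) = 0)
  calc a = a * (s * b) := by rw [hsb, mul_one]
    _ = b := by rw [← mul_assoc, mul_comm a, ha, one_mul]

lemma PowerSeries.coeff_rescale_inv_mul_rescale {K : Type*} [Field K] {y : K} (hy : y ≠ 0)
    (f g : K⟦X⟧) (n : ℕ) : coeff n (rescale y⁻¹ f * rescale y g)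
      = (y ^ n)⁻¹ * ∑ k ∈ range (n + 1), coeff k g * (y ^ 2) ^ k * coeff (n - k) f := by
  rw [mul_comm, coeff_mul, Nat.sum_antidiagonal_eq_sum_range_succ_mk, mul_sum]
  refine sum_congr rfl fun k hk => ?_
  obtain ⟨m, rfl⟩ := Nat.exists_eq_add_of_le (mem_range_succ_iff.1 hk)
  simp only [coeff_rescale, Nat.add_sub_cancel_left, inv_pow]
  field_simp
  ring

lemma Filter.Tendsto.mul_sqrt_add_natCast {f : ℕ → ℝ} {L : ℝ}
    (hf : Tendsto (fun n => f n * √n) atTop (𝓝 L)) (k : ℕ) :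
    Tendsto (fun n => f n * √(n + k)) atTop (𝓝 L) := by
  have hratio : Tendsto (fun n : ℕ => √(n / (n + k))) atTop (𝓝 1) := by
    simpa using (tendsto_natCast_div_add_atTop (k : ℝ)).sqrt
  have hdiv := hf.div hratio one_ne_zero
  rw [div_one] at hdiv
  refine hdiv.congr' ?_
  filter_upwards [eventually_gt_atTop 0] with n hn
  have : (0 : ℝ) < n := by exact_mod_cast hn
  rw [Pi.div_apply, Real.sqrt_div this.le]
  field_simp

lemma sqrt_natCast_le_sqrt_sub_add_one_mul {k n : ℕ} (hkn : k ≤ n) :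
    √n ≤ √((n - k : ℕ) + 1) * √(k + 1) := by
  rw [← Real.sqrt_mul (by positivity)]
  refine Real.sqrt_le_sqrt ?_
  rw [Nat.cast_sub hkn]
  nlinarith [(Nat.cast_le (α := ℝ)).2 hkn, k.cast_nonneg (α := ℝ)]

/-- Dominated convergence: as `‖f m‖ √(m + 1) ≤ M`, the `k`-th term is at most
`M ‖g k‖ √(k + 1)` because `n ≤ (n - k + 1)(k + 1)`. -/
lemma tendsto_sqrt_mul_sum_mul {f g : ℕ → ℝ} {L : ℝ}
    (hf : Tendsto (fun n => f n * √n) atTop (𝓝 L)) (hg : Summable fun k => ‖g k‖ * √(k + 1)) :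
    Tendsto (fun n : ℕ => √n * ∑ k ∈ range (n + 1), g k * f (n - k)) atTop
      (𝓝 ((∑' k, g k) * L)) := by
  obtain ⟨M, hM⟩ := (hf.mul_sqrt_add_natCast 1).norm.bddAbove_range
  have hfM (m : ℕ) : ‖f m‖ * √(m + 1) ≤ M := by
    simpa [Real.norm_eq_abs, abs_mul, abs_of_nonneg (Real.sqrt_nonneg _)] using
      hM (Set.mem_range_self m)
  let F (n k : ℕ) : ℝ := if k ≤ n then √n * (g k * f (n - k)) else 0
  have hF (n : ℕ) : √n * ∑ k ∈ range (n + 1), g k * f (n - k) = ∑' k, F n k := by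
    rw [tsum_eq_sum (s := range (n + 1)) fun k hk => if_neg (by simpa using hk), mul_sum]
    exact sum_congr rfl fun k hk => (if_pos (mem_range_succ_iff.1 hk)).symm
  simp_rw [hF, ← tsum_mul_right]
  refine tendsto_tsum_of_dominated_convergence (hg.mul_left M) (fun k => ?_) ?_
  · refine (((hf.mul_sqrt_add_natCast k).comp (tendsto_sub_atTop_nat k)).const_mul (g k)).congr' ?_
    filter_upwards [eventually_ge_atTop k] with n hn
    simp only [F, if_pos hn, Function.comp_apply, Nat.cast_sub hn, sub_add_cancel]
    ring
  · have hM0 : 0 ≤ M := le_trans (by positivity) (hfM 0)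
    refine Eventually.of_forall fun n k => ?_
    by_cases hkn : k ≤ n
    · calc ‖F n k‖ = ‖g k‖ * (‖f (n - k)‖ * √n) := by
            simp only [F, if_pos hkn, norm_mul, Real.norm_of_nonneg (Real.sqrt_nonneg _)]
            ring
        _ ≤ ‖g k‖ * ((‖f (n - k)‖ * √((n - k : ℕ) + 1)) * √(k + 1)) := by
            rw [mul_assoc (‖f (n - k)‖)]
            gcongr
            exact sqrt_natCast_le_sqrt_sub_add_one_mul hkn
        _ ≤ ‖g k‖ * (M * √(k + 1)) := by gcongr; exact hfM _
        _ = M * (‖g k‖ * √(k + 1)) := by ring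
    · simp only [F, if_neg hkn, norm_zero]
      positivity

section
variable {q : ℝ} (hq0 : 0 ≤ q) (hq1 : q < 1)
include hq0 hq1

lemma summable_invSqrtCoeff_mul_pow_mul_sqrt :
    Summable fun k : ℕ => ‖invSqrtCoeff k * q ^ k‖ * √(k + 1) := by
  have hgeom : Summable fun k : ℕ => ((k : ℝ) + 1) * q ^ k := by
    have hq : ‖q‖ < 1 := by rwa [Real.norm_of_nonneg hq0]
    simpa [add_mul] using (summable_pow_mul_geometric_of_norm_lt_one 1 hq).add
      (summable_geometric_of_norm_lt_one hq)
  refine hgeom.of_nonneg_of_le (fun k => by positivity) fun k => ?_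
  rw [Real.norm_of_nonneg (by have := invSqrtCoeff_pos k; positivity)]
  calc invSqrtCoeff k * q ^ k * √(k + 1) ≤ 1 * q ^ k * (k + 1) := by
        gcongr
        · exact invSqrtCoeff_le_one k
        · exact Real.sqrt_le_self_iff.2 (Or.inr (le_add_of_nonneg_left k.cast_nonneg))
    _ = _ := by ring

lemma tsum_invSqrtCoeff_mul_pow : ∑' k, invSqrtCoeff k * q ^ k = (√(1 - q))⁻¹ := by
  have hnonneg (k : ℕ) : 0 ≤ invSqrtCoeff k * q ^ k := by
    have := invSqrtCoeff_pos k
    positivity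
  have hsum : Summable fun k => ‖invSqrtCoeff k * q ^ k‖ :=
    (summable_geometric_of_lt_one hq0 hq1).of_nonneg_of_le (fun k => norm_nonneg _) fun k => by
      rw [Real.norm_of_nonneg (hnonneg k)]
      exact mul_le_of_le_one_left (by positivity) (invSqrtCoeff_le_one k)
  have hsq : (∑' k, invSqrtCoeff k * q ^ k) ^ 2 = (1 - q)⁻¹ := by
    rw [sq, tsum_mul_tsum_eq_tsum_sum_antidiagonal_of_summable_norm hsum hsum,
      ← tsum_geometric_of_lt_one hq0 hq1]
    refine tsum_congr fun n => ?_
    rw [← one_mul (q ^ n), ← sum_antidiagonal_invSqrtCoeff_mul n, sum_mul]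
    refine sum_congr rfl fun p hp => ?_
    rw [← mem_antidiagonal.1 hp, pow_add]
    ring
  rw [← Real.sqrt_inv, ← hsq, Real.sqrt_sq (tsum_nonneg hnonneg)]

lemma tendsto_sqrt_mul_sum_invSqrtCoeff_mul_pow :
    Tendsto (fun n : ℕ => √n * ∑ k ∈ range (n + 1), invSqrtCoeff k * q ^ k * invSqrtCoeff (n - k))
      atTop (𝓝 ((√(1 - q))⁻¹ * (√π)⁻¹)) := by
  rw [← tsum_invSqrtCoeff_mul_pow hq0 hq1]
  exact tendsto_sqrt_mul_sum_mul tendsto_invSqrtCoeff_mul_sqrt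
    (summable_invSqrtCoeff_mul_pow_mul_sqrt hq0 hq1)

end

lemma Real.rpow_neg_one_div_two {x : ℝ} (hx : 0 ≤ x) : x ^ (-(1 : ℝ) / 2) = (√x)⁻¹ := by
  rw [neg_div, Real.rpow_neg hx, Real.sqrt_eq_rpow]

lemma Real.rpow_neg_natCast_sub_one_div_two {x : ℝ} (hx : 0 < x) (n : ℕ) :
    x ^ (-(n : ℝ) - 1 / 2) = (x ^ n * √x)⁻¹ := by
  rw [← neg_add', Real.rpow_neg hx.le, Real.rpow_add hx, Real.rpow_natCast, Real.sqrt_eq_rpow]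

theorem stmt10 (s a : PowerSeries ℝ)
    (hs : s ^ 2 = 1 - 6 * X + X ^ 2)
    (hs0 : constantCoeff s = 1)
    (ha : s * a = 1) :
    Filter.Tendsto
      (fun n : ℕ =>
        coeff n a /
          ((3 - Real.sqrt 8) ^ (-(n : ℝ) - 1 / 2) * (2 * Real.sqrt 8) ^ (-(1 : ℝ) / 2) *
            (n : ℝ) ^ (-(1 : ℝ) / 2) / Real.sqrt Real.pi))
      Filter.atTop (nhds 1) := by
  set β : ℝ := 3 - √8
  have h8 : √8 ^ 2 = 8 := Real.sq_sqrt (by norm_num)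
  have hβ0 : 0 < β := by nlinarith [Real.sqrt_nonneg 8]
  have hβinv : β + β⁻¹ = 6 := by
    field_simp
    nlinarith
  have h1q : 1 - β ^ 2 = β * (2 * √8) := by nlinarith
  have hq : 0 < 1 - β ^ 2 := by
    rw [h1q]
    positivity
  have hA := rescale_inv_mul_rescale_invSqrtOneSubX_sq hβ0.ne'
  rw [hβinv, map_ofNat] at hA
  obtain rfl := eq_of_mul_eq_one_of_mul_sq_eq_one hs hs0 ha hA
    (by simp [constantCoeff_rescale])
  have hlim := (tendsto_sqrt_mul_sum_invSqrtCoeff_mul_pow (sq_nonneg β)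
    (by linarith)).mul_const (√(1 - β ^ 2) * √π)
  have hq' := Real.sqrt_pos.2 hq
  rw [show (√(1 - β ^ 2))⁻¹ * (√π)⁻¹ * (√(1 - β ^ 2) * √π) = 1 by field_simp] at hlim
  refine hlim.congr' ?_
  filter_upwards [eventually_gt_atTop 0] with n hn
  rw [coeff_rescale_inv_mul_rescale hβ0.ne', Real.rpow_neg_natCast_sub_one_div_two hβ0,
    Real.rpow_neg_one_div_two (by positivity), Real.rpow_neg_one_div_two n.cast_nonneg, h1q,
    Real.sqrt_mul hβ0.le]
  simp only [coeff_invSqrtOneSubX]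
  field_simp
end
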